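/- Suppose (X,𝒜,μ) and (X,𝒜′,μ) are bounded charge spaces with 𝒜′ ⊆ 𝒜 (the charge on 𝒜′ being the restriction of μ). Then d_{𝒜′}(f,g) = d_{𝒜}(f,g) for all f, g ∈ L0(X,𝒜′,μ). -/
import Mathlib


open Filter Set Topology

section ChargeDefs

variable {X : Type*}

/-- A field of sets on `X`: contains `∅`, closed under complements and finite unions. -/
structure IsSetField (𝒜 : Set (Set X)) : Prop where
  empty_mem : (∅ : Set X) ∈ 𝒜
  compl_mem : ∀ A ∈ 𝒜, Aᶜ ∈ 𝒜
  union_mem : ∀ A ∈ 𝒜, ∀ B ∈ 𝒜, A ∪ B ∈ 𝒜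

/-- A (bounded, non-negative) charge space: a field of sets together with a finitely
additive non-negative real-valued set function vanishing on `∅`.  (The function `μ` is
given on all of `𝒫(X)`; only its values on `𝒜` are constrained or used.) -/
structure IsCharge (𝒜 : Set (Set X)) (μ : Set X → ℝ) : Prop where
  isSetField : IsSetField 𝒜
  empty : μ ∅ = 0
  nonneg : ∀ A ∈ 𝒜, 0 ≤ μ A
  additive : ∀ A ∈ 𝒜, ∀ B ∈ 𝒜, Disjoint A B → μ (A ∪ B) = μ A + μ B

/-- The outer charge `μ*(A) = inf {μ B : B ∈ 𝒜, A ⊆ B}`. -/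
noncomputable def outerCharge (𝒜 : Set (Set X)) (μ : Set X → ℝ) (A : Set X) : ℝ :=
  sInf (μ '' {B | B ∈ 𝒜 ∧ A ⊆ B})

/-- A null function: `μ*({x : |h x| > ε}) = 0` for every `ε > 0`. -/
def IsNullFn (𝒜 : Set (Set X)) (μ : Set X → ℝ) (h : X → ℝ) : Prop :=
  ∀ ε > (0 : ℝ), outerCharge 𝒜 μ {x | ε < |h x|} = 0

/-- `f = g` almost everywhere: `f - g` is a null function. -/
def EqAE (𝒜 : Set (Set X)) (μ : Set X → ℝ) (f g : X → ℝ) : Prop :=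
  IsNullFn 𝒜 μ (fun x => f x - g x)

/-- `f ≤ g` almost everywhere: `f ≤ g + h` for some null function `h`. -/
def LeAE (𝒜 : Set (Set X)) (μ : Set X → ℝ) (f g : X → ℝ) : Prop :=
  ∃ h : X → ℝ, IsNullFn 𝒜 μ h ∧ ∀ x, f x ≤ g x + h x

/-- Hazy convergence of a sequence of functions. -/
def HazyConv (𝒜 : Set (Set X)) (μ : Set X → ℝ) (fn : ℕ → X → ℝ) (f : X → ℝ) : Prop :=
  ∀ ε > (0 : ℝ), Tendsto (fun n => outerCharge 𝒜 μ {x | ε < |fn n x - f x|}) atTop (𝓝 0)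

/-- A simple function w.r.t. the field `𝒜`: `Σ c_k 1_{A_k}` for a finite partition
`{A_k} ⊆ 𝒜` of `X`. -/
def IsSimpleFn (𝒜 : Set (Set X)) (f : X → ℝ) : Prop :=
  ∃ (n : ℕ) (c : Fin n → ℝ) (A : Fin n → Set X),
    (∀ k, A k ∈ 𝒜) ∧ (Pairwise fun i j => Disjoint (A i) (A j)) ∧
    (⋃ k, A k) = Set.univ ∧ ∀ x, f x = ∑ k, (A k).indicator (fun _ => c k) x

/-- `T₁`-measurability: `f` is the hazy limit of a sequence of simple functions.
`MemL0 𝒜 μ f` says `f ∈ L₀(X,𝒜,μ)`. -/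
def MemL0 (𝒜 : Set (Set X)) (μ : Set X → ℝ) (f : X → ℝ) : Prop :=
  ∃ fn : ℕ → X → ℝ, (∀ n, IsSimpleFn 𝒜 (fn n)) ∧ HazyConv 𝒜 μ fn f

/-- Integral of a simple function: `Σ_y y·μ(f⁻¹{y})` (a finite sum for simple `f`;
for a simple function `Σ c_k 1_{A_k}` over a partition this equals `Σ c_k μ(A_k)`). -/
noncomputable def sIntegral (μ : Set X → ℝ) (f : X → ℝ) : ℝ :=
  ∑ᶠ y, y * μ (f ⁻¹' {y})

/-- A determining sequence for `f`: simple functions converging hazily to `f` with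
`∫ |f_n - f_m| dμ → 0` as `m, n → ∞`. -/
def IsDetermining (𝒜 : Set (Set X)) (μ : Set X → ℝ) (fn : ℕ → X → ℝ) (f : X → ℝ) : Prop :=
  (∀ n, IsSimpleFn 𝒜 (fn n)) ∧ HazyConv 𝒜 μ fn f ∧
    Tendsto (fun mn : ℕ × ℕ => sIntegral μ (fun x => |fn mn.1 x - fn mn.2 x|)) atTop (𝓝 0)

/-- Integrability w.r.t. a charge: existence of a determining sequence.
`MemL1 𝒜 μ f` says `f ∈ L₁(X,𝒜,μ)`. -/
def MemL1 (𝒜 : Set (Set X)) (μ : Set X → ℝ) (f : X → ℝ) : Prop :=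
  ∃ fn : ℕ → X → ℝ, IsDetermining 𝒜 μ fn f

-- The integral `∫ f dμ` of an integrable function: the limit of the integrals of
-- any determining sequence (this limit is independent of the choice).
open Classical in
noncomputable def chargeIntegral (𝒜 : Set (Set X)) (μ : Set X → ℝ) (f : X → ℝ) : ℝ :=
  if h : ∃ fn : ℕ → X → ℝ, IsDetermining 𝒜 μ fn f then
    limUnder atTop (fun n => sIntegral μ (h.choose n))
  else 0

/-- Smoothness: for every `ε > 0` there is `k > 0` with `μ*({x : |f x| > k}) < ε`. -/
def SmoothFn (𝒜 : Set (Set X)) (μ : Set X → ℝ) (f : X → ℝ) : Prop :=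
  ∀ ε > (0 : ℝ), ∃ k > (0 : ℝ), outerCharge 𝒜 μ {x | k < |f x|} < ε

/-- The field of the Peano-Jordan completion of `(X,𝒜,μ)`. -/
def pjField (𝒜 : Set (Set X)) (μ : Set X → ℝ) : Set (Set X) :=
  {A | ∀ ε > (0 : ℝ), ∃ B ∈ 𝒜, ∃ C ∈ 𝒜, B ⊆ A ∧ A ⊆ C ∧ μ (C \ B) < ε}

/-- The charge of the Peano-Jordan completion: `μ̄(A) = sup {μ B : B ∈ 𝒜, B ⊆ A}`. -/
noncomputable def pjCharge (𝒜 : Set (Set X)) (μ : Set X → ℝ) (A : Set X) : ℝ :=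
  sSup (μ '' {B | B ∈ 𝒜 ∧ B ⊆ A})

/-- The pseudometric `d` on `L₀`. -/
noncomputable def hazyDist (𝒜 : Set (Set X)) (μ : Set X → ℝ) (f g : X → ℝ) : ℝ :=
  sInf {ε : ℝ | 0 < ε ∧ outerCharge 𝒜 μ {x | ε < |f x - g x|} < ε}

/-- `f ∈ L_p(X,𝒜,μ)` for `p ∈ [1,∞)`: `f` is `T₁`-measurable and `|f|^p` integrable. -/
def MemLpC (𝒜 : Set (Set X)) (μ : Set X → ℝ) (p : ℝ) (f : X → ℝ) : Prop :=
  MemL0 𝒜 μ f ∧ MemL1 𝒜 μ (fun x => |f x| ^ p)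

/-- `f ∈ L_p` for `p ∈ {0} ∪ [1,∞)`. -/
def MemLp' (𝒜 : Set (Set X)) (μ : Set X → ℝ) (p : ℝ) (f : X → ℝ) : Prop :=
  if p = 0 then MemL0 𝒜 μ f else MemLpC 𝒜 μ p f

/-- The distance on `L_p`: the pseudometric `d` for `p = 0`, and
`‖f - g‖_p = (∫ |f-g|^p dμ)^(1/p)` for `p ≥ 1`. -/
noncomputable def LpDist (𝒜 : Set (Set X)) (μ : Set X → ℝ) (p : ℝ) (f g : X → ℝ) : ℝ :=
  if p = 0 then hazyDist 𝒜 μ f g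
  else (chargeIntegral 𝒜 μ fun x => |f x - g x| ^ p) ^ (1 / p)

/-- The collection of null sets of a charge space. -/
def nullSets (𝒜 : Set (Set X)) (μ : Set X → ℝ) : Set (Set X) :=
  {A | outerCharge 𝒜 μ A = 0}

/-- The smallest field of sets on `X` containing a given collection `𝒞`. -/
def genSetField (𝒞 : Set (Set X)) : Set (Set X) :=
  ⋂₀ {𝒟 | IsSetField 𝒟 ∧ 𝒞 ⊆ 𝒟}

end ChargeDefs

section Aux

variable {X : Type*} {𝒜 : Set (Set X)} {μ : Set X → ℝ}

lemma IsSetField.univ_mem (h : IsSetField 𝒜) : (univ : Set X) ∈ 𝒜 := by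
  simpa using h.compl_mem ∅ h.empty_mem

lemma IsSetField.inter_mem (h : IsSetField 𝒜) {A B : Set X} (hA : A ∈ 𝒜) (hB : B ∈ 𝒜) :
    A ∩ B ∈ 𝒜 := by
  have := h.compl_mem _ (h.union_mem _ (h.compl_mem A hA) _ (h.compl_mem B hB))
  simpa [compl_union] using this

lemma IsSetField.diff_mem (h : IsSetField 𝒜) {A B : Set X} (hA : A ∈ 𝒜) (hB : B ∈ 𝒜) :
    A \ B ∈ 𝒜 := h.inter_mem hA (h.compl_mem B hB)

lemma IsCharge.mono (h : IsCharge 𝒜 μ) {A B : Set X} (hA : A ∈ 𝒜) (hB : B ∈ 𝒜)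
    (hAB : A ⊆ B) : μ A ≤ μ B := by
  have hd : B \ A ∈ 𝒜 := h.isSetField.diff_mem hB hA
  have : μ (A ∪ B \ A) = μ A + μ (B \ A) :=
    h.additive _ hA _ hd disjoint_sdiff_self_right
  rw [Set.union_diff_cancel hAB] at this
  linarith [h.nonneg _ hd]

lemma IsCharge.subadd (h : IsCharge 𝒜 μ) {A B : Set X} (hA : A ∈ 𝒜) (hB : B ∈ 𝒜) :
    μ (A ∪ B) ≤ μ A + μ B := by
  have hd : B \ A ∈ 𝒜 := h.isSetField.diff_mem hB hA
  have e : μ (A ∪ B \ A) = μ A + μ (B \ A) :=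
    h.additive _ hA _ hd disjoint_sdiff_self_right
  rw [Set.union_diff_self] at e
  have := h.mono hd hB diff_subset
  linarith

lemma outerCharge_bddBelow (h : IsCharge 𝒜 μ) (A : Set X) :
    BddBelow (μ '' {B | B ∈ 𝒜 ∧ A ⊆ B}) := by
  refine ⟨0, ?_⟩
  rintro x ⟨B, ⟨hB, _⟩, rfl⟩
  exact h.nonneg _ hB

lemma outerCharge_set_nonempty (h : IsCharge 𝒜 μ) (A : Set X) :
    (μ '' {B | B ∈ 𝒜 ∧ A ⊆ B}).Nonempty :=
  ⟨μ univ, ⟨univ, ⟨h.isSetField.univ_mem, subset_univ A⟩, rfl⟩⟩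

lemma outerCharge_le (h : IsCharge 𝒜 μ) {A B : Set X} (hB : B ∈ 𝒜) (hAB : A ⊆ B) :
    outerCharge 𝒜 μ A ≤ μ B :=
  csInf_le (outerCharge_bddBelow h A) ⟨B, ⟨hB, hAB⟩, rfl⟩

lemma outerCharge_nonneg (h : IsCharge 𝒜 μ) (A : Set X) : 0 ≤ outerCharge 𝒜 μ A :=
  le_csInf (outerCharge_set_nonempty h A) (by rintro x ⟨B, ⟨hB, _⟩, rfl⟩; exact h.nonneg _ hB)

lemma outerCharge_mono (h : IsCharge 𝒜 μ) {A B : Set X} (hAB : A ⊆ B) :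
    outerCharge 𝒜 μ A ≤ outerCharge 𝒜 μ B := by
  refine le_csInf (outerCharge_set_nonempty h B) ?_
  rintro x ⟨C, ⟨hC, hBC⟩, rfl⟩
  exact outerCharge_le h hC (hAB.trans hBC)

lemma outerCharge_eq_of_mem (h : IsCharge 𝒜 μ) {A : Set X} (hA : A ∈ 𝒜) :
    outerCharge 𝒜 μ A = μ A := by
  refine le_antisymm (outerCharge_le h hA subset_rfl) ?_
  refine le_csInf (outerCharge_set_nonempty h A) ?_
  rintro x ⟨B, ⟨hB, hAB⟩, rfl⟩
  exact h.mono hA hB hAB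

lemma outerCharge_union_le (h : IsCharge 𝒜 μ) (A B : Set X) :
    outerCharge 𝒜 μ (A ∪ B) ≤ outerCharge 𝒜 μ A + outerCharge 𝒜 μ B := by
  refine le_of_forall_pos_le_add fun η hη => ?_
  obtain ⟨x, ⟨C, ⟨hC, hAC⟩, rfl⟩, hx⟩ :=
    exists_lt_of_csInf_lt (outerCharge_set_nonempty h A)
      (lt_add_of_pos_right (outerCharge 𝒜 μ A) (half_pos hη))
  obtain ⟨y, ⟨D, ⟨hD, hBD⟩, rfl⟩, hy⟩ :=
    exists_lt_of_csInf_lt (outerCharge_set_nonempty h B)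
      (lt_add_of_pos_right (outerCharge 𝒜 μ B) (half_pos hη))
  have h1 : outerCharge 𝒜 μ (A ∪ B) ≤ μ (C ∪ D) :=
    outerCharge_le h (h.isSetField.union_mem _ hC _ hD) (union_subset_union hAC hBD)
  have h2 := h.subadd hC hD
  linarith

lemma outerCharge_anti_field (h : IsCharge 𝒜 μ) {𝒜' : Set (Set X)} (hsub : 𝒜' ⊆ 𝒜)
    (h' : IsCharge 𝒜' μ) (A : Set X) :
    outerCharge 𝒜 μ A ≤ outerCharge 𝒜' μ A := by
  refine csInf_le_csInf (outerCharge_bddBelow h A) (outerCharge_set_nonempty h' A) ?_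
  exact Set.image_mono fun B hB => ⟨hsub hB.1, hB.2⟩

lemma IsSetField.biUnion_mem (h : IsSetField 𝒜) {ι : Type*} (s : Finset ι) (C : ι → Set X)
    (hC : ∀ i ∈ s, C i ∈ 𝒜) : (⋃ i ∈ s, C i) ∈ 𝒜 := by
  classical
  induction s using Finset.induction_on with
  | empty => simpa using h.empty_mem
  | @insert a s' hni ih =>
    rw [Finset.set_biUnion_insert]
    exact h.union_mem _ (hC a (Finset.mem_insert_self a s'))
      _ (ih fun i hi => hC i (Finset.mem_insert_of_mem hi))

lemma simple_diff_level_mem (h : IsSetField 𝒜) {s t : X → ℝ}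
    (hs : IsSimpleFn 𝒜 s) (ht : IsSimpleFn 𝒜 t) (c : ℝ) :
    {x | c < |s x - t x|} ∈ 𝒜 := by
  classical
  obtain ⟨n, cs, A, hA, hAd, hAc, hseq⟩ := hs
  obtain ⟨m, ds, B, hB, hBd, hBc, hteq⟩ := ht
  have hval : ∀ (k : ℕ) (e : Fin k → ℝ) (S : Fin k → Set X),
      (Pairwise fun i j => Disjoint (S i) (S j)) →
      ∀ i x, x ∈ S i → (∑ k, (S k).indicator (fun _ => e k) x) = e i := by
    intro k e S hd i x hx
    rw [Finset.sum_eq_single i]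
    · exact Set.indicator_of_mem hx _
    · intro j _ hji
      exact Set.indicator_of_notMem (fun hxj => (hd hji).ne_of_mem hxj hx rfl) _
    · exact fun hi => absurd (Finset.mem_univ i) hi
  have key : {x | c < |s x - t x|} =
      ⋃ p ∈ Finset.univ.filter (fun p : Fin n × Fin m => c < |cs p.1 - ds p.2|),
        A p.1 ∩ B p.2 := by
    ext x
    simp only [mem_setOf_eq, mem_iUnion, Finset.mem_filter, Finset.mem_univ, true_and,
      mem_inter_iff]
    constructor
    · intro hx
      obtain ⟨i, hi⟩ : ∃ i, x ∈ A i := by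
        have : x ∈ ⋃ k, A k := hAc ▸ mem_univ x
        simpa using this
      obtain ⟨j, hj⟩ : ∃ j, x ∈ B j := by
        have : x ∈ ⋃ k, B k := hBc ▸ mem_univ x
        simpa using this
      refine ⟨(i, j), ?_, hi, hj⟩
      rwa [hseq x, hteq x, hval n cs A hAd i x hi, hval m ds B hBd j x hj] at hx
    · rintro ⟨⟨i, j⟩, hc, hi, hj⟩
      rw [hseq x, hteq x, hval n cs A hAd i x hi, hval m ds B hBd j x hj]
      exact hc
  rw [key]
  exact h.biUnion_mem _ _ fun p _ => h.inter_mem (hA p.1) (hB p.2)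

end Aux

/-- For nested fields `𝒜′ ⊆ 𝒜` carrying the same charge `μ`,
`d_{𝒜′}(f,g) = d_{𝒜}(f,g)` for all `f, g ∈ L₀(X,𝒜′,μ)`. -/
theorem nested_fields_dist_eq {X : Type*} (𝒜 𝒜' : Set (Set X)) (μ : Set X → ℝ)
    (hμ : IsCharge 𝒜 μ) (hμ' : IsCharge 𝒜' μ) (hsub : 𝒜' ⊆ 𝒜)
    (f g : X → ℝ) (hf : MemL0 𝒜' μ f) (hg : MemL0 𝒜' μ g) :
    hazyDist 𝒜' μ f g = hazyDist 𝒜 μ f g := by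
  set E : ℝ → Set X := fun ε => {x | ε < |f x - g x|} with hE
  set S : Set ℝ := {ε | 0 < ε ∧ outerCharge 𝒜 μ (E ε) < ε} with hS
  set S' : Set ℝ := {ε | 0 < ε ∧ outerCharge 𝒜' μ (E ε) < ε} with hS'
  have hSS : S' ⊆ S := by
    rintro ε ⟨hε, h'⟩
    exact ⟨hε, lt_of_le_of_lt (outerCharge_anti_field hμ hsub hμ' _) h'⟩
  have hS'ne : S'.Nonempty := by
    refine ⟨μ univ + 1, ?_, ?_⟩
    · have := hμ'.nonneg _ hμ'.isSetField.univ_mem; linarith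
    · have h1 : outerCharge 𝒜' μ (E (μ univ + 1)) ≤ μ univ :=
        outerCharge_le hμ' hμ'.isSetField.univ_mem (subset_univ _)
      linarith
  have hSbdd : BddBelow S := ⟨0, fun ε hε => le_of_lt hε.1⟩
  have hS'bdd : BddBelow S' := ⟨0, fun ε hε => le_of_lt hε.1⟩
  show sInf S' = sInf S
  refine le_antisymm ?_ (csInf_le_csInf hSbdd hS'ne hSS)
  refine le_csInf (hS'ne.mono hSS) fun ε hεS => ?_
  refine le_of_forall_pos_le_add fun δ hδ => ?_
  obtain ⟨hεpos, hεlt⟩ := hεS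
  refine csInf_le hS'bdd ?_
  -- show ε + δ ∈ S'
  obtain ⟨fn, hfn, hfc⟩ := hf
  obtain ⟨gn, hgn, hgc⟩ := hg
  have hδ4 : (0:ℝ) < δ/4 := by linarith
  have h1 := (hfc (δ/4) hδ4).eventually_lt_const hδ4
  have h2 := (hgc (δ/4) hδ4).eventually_lt_const hδ4
  obtain ⟨n, hn1, hn2⟩ := (h1.and h2).exists
  set Ff : Set X := {x | δ/4 < |fn n x - f x|} with hFf
  set Fg : Set X := {x | δ/4 < |gn n x - g x|} with hFg
  set F : Set X := Ff ∪ Fg with hF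
  set G : Set X := {x | ε + δ/2 < |fn n x - gn n x|} with hG
  have hGmem : G ∈ 𝒜' := simple_diff_level_mem hμ'.isSetField (hfn n) (hgn n) _
  have incl1 : E (ε + δ) ⊆ G ∪ F := by
    intro x hx
    by_cases hxF : x ∈ F
    · exact Or.inr hxF
    · left
      have hx1 : ¬ (δ/4 < |fn n x - f x|) := fun h => hxF (Or.inl h)
      have hx2 : ¬ (δ/4 < |gn n x - g x|) := fun h => hxF (Or.inr h)
      push_neg at hx1 hx2
      have hx' : ε + δ < |f x - g x| := hx
      have t1 : |f x - g x| ≤ |f x - fn n x| + |fn n x - gn n x| + |gn n x - g x| := by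
        calc |f x - g x| ≤ |f x - fn n x| + |fn n x - g x| := abs_sub_le _ _ _
          _ ≤ |f x - fn n x| + (|fn n x - gn n x| + |gn n x - g x|) := by
              linarith [abs_sub_le (fn n x) (gn n x) (g x)]
          _ = _ := by ring
      rw [abs_sub_comm (f x) (fn n x)] at t1
      show ε + δ/2 < |fn n x - gn n x|
      linarith
  have incl2 : G ⊆ E ε ∪ F := by
    intro x hx
    by_cases hxF : x ∈ F
    · exact Or.inr hxF
    · left
      have hx1 : ¬ (δ/4 < |fn n x - f x|) := fun h => hxF (Or.inl h)
      have hx2 : ¬ (δ/4 < |gn n x - g x|) := fun h => hxF (Or.inr h)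
      push_neg at hx1 hx2
      have hx' : ε + δ/2 < |fn n x - gn n x| := hx
      have t1 : |fn n x - gn n x| ≤ |fn n x - f x| + |f x - g x| + |g x - gn n x| := by
        calc |fn n x - gn n x| ≤ |fn n x - f x| + |f x - gn n x| := abs_sub_le _ _ _
          _ ≤ |fn n x - f x| + (|f x - g x| + |g x - gn n x|) := by
              linarith [abs_sub_le (f x) (g x) (gn n x)]
          _ = _ := by ring
      rw [abs_sub_comm (g x) (gn n x)] at t1
      show ε < |f x - g x|
      linarith
  have hFbound : outerCharge 𝒜' μ F < δ/2 := by
    have := outerCharge_union_le hμ' Ff Fg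
    linarith
  have c1 : outerCharge 𝒜' μ (E (ε + δ)) ≤ outerCharge 𝒜' μ G + outerCharge 𝒜' μ F :=
    (outerCharge_mono hμ' incl1).trans (outerCharge_union_le hμ' G F)
  have c2 : outerCharge 𝒜' μ G = μ G := outerCharge_eq_of_mem hμ' hGmem
  have c3 : μ G = outerCharge 𝒜 μ G := (outerCharge_eq_of_mem hμ (hsub hGmem)).symm
  have c4 : outerCharge 𝒜 μ G ≤ outerCharge 𝒜 μ (E ε) + outerCharge 𝒜 μ F :=
    (outerCharge_mono hμ incl2).trans (outerCharge_union_le hμ (E ε) F)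
  have c5 : outerCharge 𝒜 μ F ≤ outerCharge 𝒜' μ F := outerCharge_anti_field hμ hsub hμ' F
  exact ⟨by linarith, by linarith⟩
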